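/- Let (M, x) and (N, y) be pointed proper metric spaces. Suppose that for every R > 0 and every r > 0 there exists an admissible pseudometric d on M ⊔ N such that max{ d(x,y), H_{d,R}(M,x;N,y) } < r. Then there exists a bijective isometry φ : M → N with φ(x) = y. (This is the nontrivial inclusion in the identity ⋂_{R,r>0} U_{R,r} = Δ for the basic entourages of the Gromov space.) -/

import Mathlib

/-!
For each `n`, an admissible `d` with `R = n + 1` and `r = 1 / (n + 1)` lets us send every point
of `B(x, n + 1)` to a `d`-nearby point of `N`; this gives maps `f n : M → N` that distort
distances on the ball by less than `2 / (n + 1)` and move `x` to within `2 / (n + 1)` of `y`.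
As `N` is proper, each orbit `(f n u)ₙ` stays in a compact ball, so the `f n` converge pointwise
along an ultrafilter, and the limit is an isometry `φ` with `φ x = y`.

The hypothesis is symmetric, so there is also a pointed isometry `ψ : N → M`. Then `φ ∘ ψ` is an
isometry of `N` fixing `y`, so it maps each compact ball `closedBall y ρ` into itself; an isometric
self-map of a compact set is onto it, since otherwise the orbit of a point outside the image
would be uniformly separated. Hence `φ` is surjective.
-/

noncomputable section

/-- A pseudometric on the disjoint union `α ⊔ β` of two metric spaces is admissible
if it is symmetric, vanishes on the diagonal, satisfies the triangle inequality,
and restricts to the given metrics on `α` and on `β`. -/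
def Admissible {α β : Type*} [MetricSpace α] [MetricSpace β]
    (d : α ⊕ β → α ⊕ β → ℝ) : Prop :=
  (∀ a b, d a b = d b a) ∧ (∀ a, d a a = 0) ∧
  (∀ a b c, d a c ≤ d a b + d b c) ∧
  (∀ a b : α, d (Sum.inl a) (Sum.inl b) = dist a b) ∧
  (∀ a b : β, d (Sum.inr a) (Sum.inr b) = dist a b)

/-- `H_{d,R}(α,x;β,y) = max { sup_{u ∈ B_α(x,R)} d(u,β), sup_{v ∈ B_β(y,R)} d(v,α) }`,
for a pseudometric `d` on `α ⊔ β`. -/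
noncomputable def HR {α β : Type*} [MetricSpace α] [MetricSpace β]
    (d : α ⊕ β → α ⊕ β → ℝ) (x : α) (y : β) (R : ℝ) : ℝ :=
  max (⨆ u : Metric.ball x R, ⨅ v : β, d (Sum.inl (u : α)) (Sum.inr v))
      (⨆ v : Metric.ball y R, ⨅ u : α, d (Sum.inr (v : β)) (Sum.inl u))

open Filter Function Metric Set Topology

namespace Admissible

variable {α β : Type*} [MetricSpace α] [MetricSpace β] {d : α ⊕ β → α ⊕ β → ℝ}

lemma nonneg (hd : Admissible d) (a b : α ⊕ β) : 0 ≤ d a b := by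
  obtain ⟨hsymm, hzero, htri, -, -⟩ := hd
  linarith [htri a b a, hzero a, hsymm a b]

lemma swap (hd : Admissible d) : Admissible (fun a b : β ⊕ α => d a.swap b.swap) := by
  obtain ⟨hsymm, hzero, htri, hα, hβ⟩ := hd
  exact ⟨fun _ _ => hsymm _ _, fun _ => hzero _, fun _ _ _ => htri _ _ _, hβ, hα⟩

lemma HR_swap (x : α) (y : β) (R : ℝ) :
    HR (fun a b : β ⊕ α => d a.swap b.swap) y x R = HR d x y R :=
  max_comm _ _

lemma abs_dist_sub_dist_le (hd : Admissible d) (u v : α) (u' v' : β) :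
    |dist u' v' - dist u v| ≤ d (.inl u) (.inr u') + d (.inl v) (.inr v') := by
  obtain ⟨hsymm, -, htri, hα, hβ⟩ := hd
  rw [abs_le]
  constructor
  · linarith [htri (.inl u) (.inr u') (.inl v), htri (.inr u') (.inr v') (.inl v),
      hsymm (.inr v') (.inl v), hα u v, hβ u' v']
  · linarith [htri (.inr u') (.inl u) (.inr v'), htri (.inl u) (.inl v) (.inr v'),
      hsymm (.inr u') (.inl u), hα u v, hβ u' v']

lemma exists_lt_of_HR_lt (hd : Admissible d) {x : α} {y : β} {R r : ℝ} (hHR : HR d x y R < r)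
    {u : α} (hu : u ∈ ball x R) : ∃ v : β, d (.inl u) (.inr v) < r := by
  have hbdd : BddAbove (range fun u : ball x R => ⨅ v : β, d (.inl (u : α)) (.inr v)) := by
    refine ⟨R + d (.inl x) (.inr y), ?_⟩
    rintro _ ⟨u, rfl⟩
    calc ⨅ v : β, d (.inl (u : α)) (.inr v)
        ≤ d (.inl (u : α)) (.inr y) := ciInf_le ⟨0, by rintro _ ⟨v, rfl⟩; exact hd.nonneg _ _⟩ y
      _ ≤ d (.inl (u : α)) (.inl x) + d (.inl x) (.inr y) := hd.2.2.1 _ _ _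
      _ ≤ R + d (.inl x) (.inr y) := by
        rw [hd.2.2.2.1]; linarith [mem_ball.mp u.2]
  have : Nonempty β := ⟨y⟩
  exact exists_lt_of_ciInf_lt
    (((le_ciSup hbdd ⟨u, hu⟩).trans (le_max_left _ _)).trans_lt hHR)

lemma exists_pointed_approx (hd : Admissible d) {x : α} {y : β} {R r : ℝ} (hR : 0 < R)
    (hlt : max (d (.inl x) (.inr y)) (HR d x y R) < r) :
    ∃ f : α → β, dist (f x) y < 2 * r ∧
      ∀ u ∈ ball x R, ∀ v ∈ ball x R, |dist (f u) (f v) - dist u v| < 2 * r := by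
  obtain ⟨hxy, hHR⟩ := max_lt_iff.mp hlt
  choose g hg using fun u : ball x R => hd.exists_lt_of_HR_lt hHR u.2
  classical
  set f : α → β := fun u => if hu : u ∈ ball x R then g ⟨u, hu⟩ else y
  have hf : ∀ u ∈ ball x R, d (.inl u) (.inr (f u)) < r := fun u hu => by
    simpa only [f, dif_pos hu] using hg ⟨u, hu⟩
  refine ⟨f, ?_, fun u hu v hv => ?_⟩
  · have hx := hf x (mem_ball_self hR)
    obtain ⟨hsymm, -, htri, -, hβ⟩ := hd
    linarith [htri (.inr (f x)) (.inl x) (.inr y), hβ (f x) y, hsymm (.inr (f x)) (.inl x)]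
  · linarith [hd.abs_dist_sub_dist_le u v (f u) (f v), hf u hu, hf v hv]

end Admissible

section Limits

variable {M N : Type*} [MetricSpace M] [MetricSpace N]

lemma exists_isometry_of_tendsto_dist [ProperSpace N] {ι : Type*} {l : Filter ι} [l.NeBot]
    (f : ι → M → N) (x : M) (y : N) (hx : Tendsto (fun i => f i x) l (𝓝 y))
    (hf : ∀ u v, Tendsto (fun i => dist (f i u) (f i v)) l (𝓝 (dist u v))) :
    ∃ φ : M → N, Isometry φ ∧ φ x = y := by
  set U : Ultrafilter ι := Ultrafilter.of l
  have hU : (U : Filter ι) ≤ l := Ultrafilter.of_le l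
  have hlim : ∀ u, ∃ z, Tendsto (fun i => f i u) U (𝓝 z) := fun u => by
    have hbound : ∀ᶠ i in l, f i u ∈ closedBall y (dist u x + 1) := by
      have hdist : Tendsto (fun i => dist (f i u) (f i x) + dist (f i x) y) l
          (𝓝 (dist u x + 0)) := (hf u x).add (dist_self y ▸ hx.dist tendsto_const_nhds)
      rw [add_zero] at hdist
      filter_upwards [hdist.eventually (gt_mem_nhds (lt_add_one (dist u x)))] with i hi
      exact mem_closedBall.mpr ((dist_triangle _ _ _).trans hi.le)
    obtain ⟨z, -, hz⟩ := (isCompact_closedBall y (dist u x + 1)).ultrafilter_le_nhds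
      (U.map fun i => f i u) (le_principal_iff.mpr (hU hbound))
    exact ⟨z, hz⟩
  choose φ hφ using hlim
  refine ⟨φ, Isometry.of_dist_eq fun u v => ?_, tendsto_nhds_unique (hφ x) (hx.mono_left hU)⟩
  exact tendsto_nhds_unique ((hφ u).dist (hφ v)) ((hf u v).mono_left hU)

lemma exists_isometry_of_forall_approx [ProperSpace N] (x : M) (y : N)
    (h : ∀ R > (0 : ℝ), ∀ ε > (0 : ℝ), ∃ f : M → N, dist (f x) y < ε ∧
      ∀ u ∈ ball x R, ∀ v ∈ ball x R, |dist (f u) (f v) - dist u v| < ε) :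
    ∃ φ : M → N, Isometry φ ∧ φ x = y := by
  choose f hfx hf using fun n : ℕ =>
    h ((n : ℝ) + 1) (by positivity) (1 / ((n : ℝ) + 1)) (by positivity)
  have hε : Tendsto (fun n : ℕ => 1 / ((n : ℝ) + 1)) atTop (𝓝 0) :=
    tendsto_one_div_add_atTop_nhds_zero_nat
  refine exists_isometry_of_tendsto_dist (l := atTop) f x y ?_ fun u v => ?_
  · exact tendsto_iff_dist_tendsto_zero.mpr
      (squeeze_zero (fun _ => dist_nonneg) (fun n => (hfx n).le) hε)
  · rw [tendsto_iff_dist_tendsto_zero]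
    refine squeeze_zero' (Eventually.of_forall fun _ => dist_nonneg) ?_ hε
    filter_upwards [eventually_gt_atTop ⌈max (dist u x) (dist v x)⌉₊] with n hn
    have hn' : max (dist u x) (dist v x) < (n : ℝ) + 1 :=
      (Nat.le_ceil _).trans_lt (by exact_mod_cast hn.trans (Nat.lt_succ_self n))
    exact (hf n u (mem_ball.mpr ((le_max_left _ _).trans_lt hn'))
      v (mem_ball.mpr ((le_max_right _ _).trans_lt hn'))).le

end Limits

lemma exists_isometry_of_close {M N : Type*} [MetricSpace M] [MetricSpace N] [ProperSpace N]
    (x : M) (y : N)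
    (h : ∀ R > (0 : ℝ), ∀ r > (0 : ℝ), ∃ d : M ⊕ N → M ⊕ N → ℝ, Admissible d ∧
      max (d (Sum.inl x) (Sum.inr y)) (HR d x y R) < r) :
    ∃ φ : M → N, Isometry φ ∧ φ x = y := by
  refine exists_isometry_of_forall_approx x y fun R hR ε hε => ?_
  obtain ⟨d, hd, hlt⟩ := h R hR (ε / 2) (by positivity)
  simpa only [mul_div_cancel₀ ε two_ne_zero] using hd.exists_pointed_approx hR hlt

lemma close_symm {M N : Type*} [MetricSpace M] [MetricSpace N] {x : M} {y : N}
    (h : ∀ R > (0 : ℝ), ∀ r > (0 : ℝ), ∃ d : M ⊕ N → M ⊕ N → ℝ, Admissible d ∧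
      max (d (Sum.inl x) (Sum.inr y)) (HR d x y R) < r) :
    ∀ R > (0 : ℝ), ∀ r > (0 : ℝ), ∃ d : N ⊕ M → N ⊕ M → ℝ, Admissible d ∧
      max (d (Sum.inl y) (Sum.inr x)) (HR d y x R) < r := fun R hR r hr => by
  obtain ⟨d, hd, hlt⟩ := h R hR r hr
  refine ⟨_, hd.swap, ?_⟩
  rwa [Admissible.HR_swap, Sum.swap_inl, Sum.swap_inr, hd.1]

lemma IsCompact.surjOn_of_isometry {α : Type*} [MetricSpace α] {s : Set α} (hs : IsCompact s)
    {g : α → α} (hg : Isometry g) (hmap : MapsTo g s s) : SurjOn g s s := by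
  intro a ha
  by_contra hna
  set ε := infDist a (g '' s)
  have hε : 0 < ε := ((hs.image hg.continuous).isClosed.notMem_iff_infDist_pos
    ⟨g a, mem_image_of_mem g ha⟩).mp hna
  have hiter : ∀ k, Isometry g^[k] := fun k => by
    induction k with
    | zero => exact isometry_id
    | succ k ih => rw [iterate_succ']; exact hg.comp ih
  -- the orbit of `a` is `ε`-separated, since `g^[j - i] a ∈ g '' s` for `i < j`
  have hsep : ∀ i j, i < j → ε ≤ dist (g^[i] a) (g^[j] a) := fun i j hij => by
    obtain ⟨k, rfl⟩ := Nat.exists_eq_add_of_lt hij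
    rw [add_assoc, iterate_add_apply, (hiter i).dist_eq, iterate_succ_apply']
    exact infDist_le_dist_of_mem (mem_image_of_mem g (hmap.iterate k ha))
  obtain ⟨z, -, σ, hσ, hconv⟩ := hs.tendsto_subseq fun n => hmap.iterate n ha
  obtain ⟨K, hK⟩ := cauchySeq_iff'.mp hconv.cauchySeq ε hε
  exact (hK (K + 1) K.le_succ).not_ge
    (dist_comm (g^[σ K] a) _ ▸ hsep _ _ (hσ K.lt_succ_self))

lemma Isometry.surjective_of_isFixedPt {α : Type*} [MetricSpace α] [ProperSpace α] {g : α → α}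
    (hg : Isometry g) {y : α} (hy : IsFixedPt g y) : Surjective g := fun z => by
  have hmap : MapsTo g (closedBall y (dist z y)) (closedBall y (dist z y)) := fun w hw =>
    mem_closedBall.mpr (by simpa only [hy.eq] using (hg.dist_eq w y).trans_le hw)
  obtain ⟨w, -, hw⟩ := (isCompact_closedBall y (dist z y)).surjOn_of_isometry hg hmap
    (mem_closedBall.mpr le_rfl)
  exact ⟨w, hw⟩

/-- The nontrivial inclusion in `⋂_{R,r>0} U_{R,r} = Δ`: if for all `R, r > 0` the
pointed proper metric spaces `(M,x)` and `(N,y)` admit an admissible pseudometric `d`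
on `M ⊔ N` with `max{d(x,y), H_{d,R}(M,x;N,y)} < r`, then there is a pointed
bijective isometry `(M,x) → (N,y)`. -/
theorem pointed_isometric_of_close (M N : Type*) [MetricSpace M] [MetricSpace N]
    [ProperSpace M] [ProperSpace N] (x : M) (y : N)
    (h : ∀ R > (0 : ℝ), ∀ r > (0 : ℝ), ∃ d : M ⊕ N → M ⊕ N → ℝ, Admissible d ∧
      max (d (Sum.inl x) (Sum.inr y)) (HR d x y R) < r) :
    ∃ φ : M → N, Function.Bijective φ ∧ (∀ a b, dist (φ a) (φ b) = dist a b) ∧ φ x = y := by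
  obtain ⟨φ, hφ, hφx⟩ := exists_isometry_of_close x y h
  obtain ⟨ψ, hψ, hψy⟩ := exists_isometry_of_close y x (close_symm h)
  have hfix : IsFixedPt (φ ∘ ψ) y := by simp [IsFixedPt, hψy, hφx]
  exact ⟨φ, ⟨hφ.injective, ((hφ.comp hψ).surjective_of_isFixedPt hfix).of_comp⟩,
    hφ.dist_eq, hφx⟩
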